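/- arXiv:2309.07942 — 2 statements merged into one kernel-verified Lean document; each statement's English description precedes it below -/
import Mathlib

section
/- Isoperimetric inequality on ℤ^d: for every nonempty finite set Λ ⊂ ℤ^d, the inner vertex boundary ∂_in Λ = { x ∈ Λ : ∃ y ∉ Λ with |x − y|_1 = 1 } satisfies |Λ|^{1 − 1/d} ≤ |∂_in Λ|. -/
/-!
By the discrete Loomis–Whitney inequality, `|Λ|^(d-1) ≤ ∏ᵢ |πᵢ Λ|`, where `πᵢ` forgets the
`i`-th coordinate. Each line of `Λ` in direction `eᵢ` has a topmost point, which lies in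
`∂_in Λ`, so `|πᵢ Λ| ≤ |∂_in Λ|` and hence `|Λ|^(d-1) ≤ |∂_in Λ|^d`.

Loomis–Whitney is proved by induction on the number of coordinates: slicing `A` by the value of
one coordinate `a`, each slice injects into `πₐ A`, the induction hypothesis bounds a slice by
its other projections, and Hölder's inequality sums these bounds, the `πᵢ`-images of distinct
slices being disjoint.
-/

open Finset NNReal MeasureTheory
open scoped ENNReal

theorem NNReal.sum_prod_rpow_le_prod_sum_rpow {α ι : Type*} (s : Finset α) (u : Finset ι)
    (c : ι → α → ℝ≥0) {p : ι → ℝ} (hp : ∑ i ∈ u, p i = 1) (hp0 : ∀ i ∈ u, 0 ≤ p i) :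
    ∑ t ∈ s, ∏ i ∈ u, c i t ^ p i ≤ ∏ i ∈ u, (∑ t ∈ s, c i t) ^ p i := by
  let _ : MeasurableSpace s := ⊤
  have holder := ENNReal.lintegral_prod_norm_pow_le (μ := Measure.count) u
    (f := fun i (t : s) => (c i t : ℝ≥0∞)) (fun _ _ => (measurable_of_countable _).aemeasurable)
    hp hp0
  have hcoe : ∀ x : ℝ≥0, ∀ i ∈ u, (x : ℝ≥0∞) ^ p i = ↑(x ^ p i) := fun x i hi =>
    (ENNReal.coe_rpow_of_nonneg x (hp0 i hi)).symm
  simp only [lintegral_count, tsum_fintype, ← ENNReal.ofNNReal_finsetSum] at holder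
  rw [← ENNReal.coe_le_coe, ENNReal.ofNNReal_finsetSum, ENNReal.ofNNReal_finsetProd,
    ← Finset.sum_coe_sort s]
  convert holder using 2 with t _ i hi
  · rw [ENNReal.ofNNReal_finsetProd]
    exact Finset.prod_congr rfl fun i hi => (hcoe _ i hi).symm
  · rw [hcoe _ i hi, Finset.sum_coe_sort s (c i)]

theorem NNReal.sum_pow_card_le_mul_prod {α ι : Type*} (T : Finset α) {s : Finset ι}
    (hs : s.Nonempty) {b : α → ℝ≥0} {P : ℝ≥0} {c : ι → α → ℝ≥0} {Q : ι → ℝ≥0}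
    (hb : ∀ t ∈ T, b t ^ #s ≤ P * ∏ i ∈ s, c i t) (hc : ∀ i ∈ s, ∑ t ∈ T, c i t ≤ Q i) :
    (∑ t ∈ T, b t) ^ #s ≤ P * ∏ i ∈ s, Q i := by
  have hk : (0 : ℝ) < #s := by exact_mod_cast hs.card_pos
  have hexp : ∑ _i ∈ s, (#s : ℝ)⁻¹ = 1 := by
    rw [sum_const, nsmul_eq_mul, mul_inv_cancel₀ hk.ne']
  rw [← rpow_natCast, ← le_rpow_inv_iff hk, mul_rpow, ← finsetProd_rpow]
  calc ∑ t ∈ T, b t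
      ≤ ∑ t ∈ T, P ^ (#s : ℝ)⁻¹ * ∏ i ∈ s, c i t ^ (#s : ℝ)⁻¹ := sum_le_sum fun t ht => by
        rw [finsetProd_rpow, ← mul_rpow, le_rpow_inv_iff hk, rpow_natCast]
        exact hb t ht
    _ ≤ P ^ (#s : ℝ)⁻¹ * ∏ i ∈ s, (∑ t ∈ T, c i t) ^ (#s : ℝ)⁻¹ := by
        rw [← mul_sum]
        exact mul_le_mul_right
          (sum_prod_rpow_le_prod_sum_rpow T s c hexp fun _ _ => by positivity) _
    _ ≤ P ^ (#s : ℝ)⁻¹ * ∏ i ∈ s, Q i ^ (#s : ℝ)⁻¹ :=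
        mul_le_mul_right (prod_le_prod' fun i hi => rpow_le_rpow (hc i hi) (by positivity)) _

section EraseCoord

variable {ι β : Type*} [DecidableEq ι] [Zero β]

/-- `πᵢ`, realized inside `ι → β` as the hyperplane `x i = 0`. -/
def eraseCoord (i : ι) (x : ι → β) : ι → β := Function.update x i 0

@[simp]
lemma eraseCoord_apply_of_ne {i j : ι} (h : j ≠ i) (x : ι → β) : eraseCoord i x j = x j :=
  Function.update_of_ne h _ _

lemma eraseCoord_injOn_slice (i : ι) (t : β) : Set.InjOn (eraseCoord i) {x | x i = t} := by
  intro x hx y hy hxy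
  funext j
  by_cases hj : j = i
  · subst hj
    exact hx.trans hy.symm
  · simpa [hj] using congrFun hxy j

variable [DecidableEq β] [DecidableEq (ι → β)]

lemma card_slice_le_card_image_eraseCoord (A : Finset (ι → β)) (i : ι) (t : β) :
    #{x ∈ A | x i = t} ≤ #(A.image (eraseCoord i)) := by
  calc #{x ∈ A | x i = t} = #({x ∈ A | x i = t}.image (eraseCoord i)) :=
        (card_image_of_injOn ((eraseCoord_injOn_slice i t).mono
          fun _ hx => (mem_filter.1 hx).2)).symm
    _ ≤ #(A.image (eraseCoord i)) := card_le_card (image_subset_image (filter_subset _ _))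

lemma sum_card_image_eraseCoord_slice_le {i₀ i : ι} (h : i ≠ i₀) (A : Finset (ι → β))
    (T : Finset β) :
    ∑ t ∈ T, #({x ∈ A | x i₀ = t}.image (eraseCoord i)) ≤ #(A.image (eraseCoord i)) := by
  have hslice : ∀ t, {x ∈ A | x i₀ = t}.image (eraseCoord i) =
      {y ∈ A.image (eraseCoord i) | y i₀ = t} := fun t => by
    simp [filter_image, eraseCoord_apply_of_ne h.symm]
  simp only [hslice, sum_card_fiberwise_eq_card_filter]
  exact card_filter_le _ _

theorem card_pow_le_prod_card_image_eraseCoord (u : Finset ι) {A : Finset (ι → β)}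
    (hA : A.Nonempty) : #A ^ (#u - 1) ≤ ∏ i ∈ u, #(A.image (eraseCoord i)) := by
  induction u using Finset.cons_induction generalizing A with
  | empty => simp
  | cons a s ha IH =>
  rcases s.eq_empty_or_nonempty with rfl | hs
  · simpa using hA.image (eraseCoord a)
  set T := A.image fun x : ι → β => x a
  set B : β → Finset (ι → β) := fun t => {x ∈ A | x a = t}
  have hslice : ∀ t ∈ T, #(B t) ^ #s ≤
      #(A.image (eraseCoord a)) * ∏ i ∈ s, #((B t).image (eraseCoord i)) := by
    intro t ht
    obtain ⟨x, hx, rfl⟩ := mem_image.1 ht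
    calc #(B (x a)) ^ #s = #(B (x a)) * #(B (x a)) ^ (#s - 1) := by
          rw [← pow_succ', Nat.sub_add_cancel hs.card_pos]
      _ ≤ _ := Nat.mul_le_mul (card_slice_le_card_image_eraseCoord A a (x a))
          (IH ⟨x, mem_filter.2 ⟨hx, rfl⟩⟩)
  have hsum : ∀ i ∈ s, ∑ t ∈ T, (#((B t).image (eraseCoord i)) : ℝ≥0) ≤
      #(A.image (eraseCoord i)) := fun i hi =>
    mod_cast sum_card_image_eraseCoord_slice_le (ne_of_mem_of_not_mem hi ha) A T
  have key := NNReal.sum_pow_card_le_mul_prod T hs (b := fun t => (#(B t) : ℝ≥0))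
    (P := #(A.image (eraseCoord a))) (fun t ht => mod_cast hslice t ht) hsum
  rw [card_cons, Nat.add_sub_cancel, prod_cons, card_eq_sum_card_image (fun x : ι → β => x a) A]
  exact_mod_cast key

end EraseCoord

section InnerBoundary

variable {ι : Type*} [Fintype ι]

open Classical in
noncomputable def innerBoundary (Λ : Finset (ι → ℤ)) : Finset (ι → ℤ) :=
  {x ∈ Λ | ∃ y, y ∉ Λ ∧ ∑ j, |x j - y j| = 1}

lemma mem_innerBoundary {Λ : Finset (ι → ℤ)} {x : ι → ℤ} :
    x ∈ innerBoundary Λ ↔ x ∈ Λ ∧ ∃ y, y ∉ Λ ∧ ∑ j, |x j - y j| = 1 := by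
  simp [innerBoundary]

variable [DecidableEq ι]

lemma image_eraseCoord_subset_image_innerBoundary (Λ : Finset (ι → ℤ)) (i : ι) :
    Λ.image (eraseCoord i) ⊆ (innerBoundary Λ).image (eraseCoord i) := by
  intro z hz
  obtain ⟨x, hx, rfl⟩ := mem_image.1 hz
  obtain ⟨m, hm, hmax⟩ := exists_max_image {w ∈ Λ | eraseCoord i w = eraseCoord i x} (· i)
    ⟨x, mem_filter.2 ⟨hx, rfl⟩⟩
  obtain ⟨hmΛ, hmx⟩ := mem_filter.1 hm
  set y := Function.update m i (m i + 1)
  have hy : y ∉ Λ := fun hyΛ => by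
    have := hmax y (mem_filter.2 ⟨hyΛ, by rw [← hmx]; exact Function.update_idem _ _ _⟩)
    simp [y] at this
  have hdist : ∑ j, |m j - y j| = 1 := by
    rw [Fintype.sum_eq_single i fun j hj => by simp [y, Function.update_of_ne hj]]
    simp [y]
  exact mem_image.2 ⟨m, mem_innerBoundary.2 ⟨hmΛ, y, hy, hdist⟩, hmx⟩

lemma card_image_eraseCoord_le_card_innerBoundary (Λ : Finset (ι → ℤ)) (i : ι) :
    #(Λ.image (eraseCoord i)) ≤ #(innerBoundary Λ) :=
  (card_le_card (image_eraseCoord_subset_image_innerBoundary Λ i)).trans card_image_le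

theorem card_pow_le_card_innerBoundary_pow {Λ : Finset (ι → ℤ)} (hΛ : Λ.Nonempty) :
    #Λ ^ (Fintype.card ι - 1) ≤ #(innerBoundary Λ) ^ Fintype.card ι :=
  calc #Λ ^ (Fintype.card ι - 1) ≤ ∏ i, #(Λ.image (eraseCoord i)) :=
        card_pow_le_prod_card_image_eraseCoord univ hΛ
    _ ≤ ∏ _i : ι, #(innerBoundary Λ) :=
        prod_le_prod' fun i _ => card_image_eraseCoord_le_card_innerBoundary Λ i
    _ = #(innerBoundary Λ) ^ Fintype.card ι := by rw [prod_const, card_univ]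

end InnerBoundary

theorem Real.rpow_one_sub_inv_le_of_pow_le {a b : ℝ} (ha : 0 ≤ a) (hb : 0 ≤ b) {d : ℕ}
    (hd : 1 ≤ d) (h : a ^ (d - 1) ≤ b ^ d) : a ^ (1 - 1 / (d : ℝ)) ≤ b := by
  have hd0 : d ≠ 0 := by omega
  refine (pow_le_pow_iff_left₀ (by positivity) hb hd0).1 ?_
  rwa [← Real.rpow_mul_natCast ha, sub_mul, one_div, inv_mul_cancel₀ (by exact_mod_cast hd0),
    one_mul, ← Nat.cast_pred (by omega), Real.rpow_natCast]

/-- Isoperimetric inequality on `ℤ^d`: for every nonempty finite `Λ ⊂ ℤ^d`, the inner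
vertex boundary `∂_in Λ = {x ∈ Λ : ∃ y ∉ Λ, |x − y|₁ = 1}` satisfies
`|Λ|^{1 − 1/d} ≤ |∂_in Λ|`. -/
theorem stmt3 (d : ℕ) (hd : 1 ≤ d) (Λ : Finset (Fin d → ℤ)) (hΛ : Λ.Nonempty) :
    (Λ.card : ℝ) ^ ((1 : ℝ) - 1 / (d : ℝ)) ≤
      ({x | x ∈ Λ ∧ ∃ y, y ∉ Λ ∧ (∑ i, |x i - y i|) = 1} : Set (Fin d → ℤ)).ncard := by
  have hset : {x | x ∈ Λ ∧ ∃ y, y ∉ Λ ∧ (∑ i, |x i - y i|) = 1} = (innerBoundary Λ : Set _) :=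
    Set.ext fun _ => mem_innerBoundary.symm
  rw [hset, Set.ncard_coe_finset]
  refine Real.rpow_one_sub_inv_le_of_pow_le (by positivity) (by positivity) hd ?_
  simpa using (Nat.cast_le (α := ℝ)).2 (card_pow_le_card_innerBoundary_pow hΛ)
end

section
/- Admissibility dichotomy bound (Lemma 3.14 analogue): let C and C' be two adjacent cubes in ℤ^d of side length 2^l sharing exactly one face, and A ⊆ ℤ^d a set with |C ∩ A| ≥ |C|/2 and |C' ∩ A| < |C'|/2. Then the exterior boundary of A restricted to U = C ∪ C' satisfies 2^{l(d−1)} ≤ b |∂_ex A ∩ U| for a constant b = b(d) ≥ 1. -/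
/-!
The key fact is a discrete isoperimetric inequality in a box `B ⊆ ℤ^ι` with side lengths
`nᵢ`: every `S ⊆ B` satisfies `min |S| |B \ S| ≤ (∑ᵢ nᵢ) · |∂_B S|`. Slice `B` along a
direction `i` into the hyperplanes `yᵢ = aᵢ + t`. Translating a slice of `S` by one step loses
only points of `∂_B S` in the neighbouring slice, so all slices of `S` have the same size up to
`|∂_B S|`. Comparing with the slice where `min |Sₜ| |Bₜ \ Sₜ|` is smallest gives
`min |S| |B \ S| ≤ nᵢ |∂_B S| + ∑ₜ min |Sₜ| |Bₜ \ Sₜ|`, and each slice term is bounded by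
induction on the number of directions in which the box is non-degenerate.
For `B = C ∪ C'` and `S = A ∩ B` the hypotheses give `min |S| |B \ S| ≥ 2^{ld} / 2`, while
`∑ᵢ nᵢ = (d + 1) 2^l`.
-/

open Finset Function

theorem le_add_sum_range_of_adjacent {f β : ℕ → ℕ} {n : ℕ}
    (hstep : ∀ t s, t < n → s < n → (s = t + 1 ∨ t = s + 1) → f t ≤ f s + β s)
    {t s : ℕ} (ht : t < n) (hs : s < n) : f t ≤ f s + ∑ k ∈ range n, β k := by
  rcases le_total t s with hts | hst
  · have up : ∀ s, t ≤ s → s < n → f t ≤ f s + ∑ k ∈ Ioc t s, β k := by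
      intro s hts
      induction s, hts using Nat.le_induction with
      | base => simp
      | succ s hts ih =>
        intro hs
        rw [sum_Ioc_succ_top hts]
        have := hstep s (s + 1) (by omega) hs (.inl rfl)
        have := ih (by omega)
        omega
    calc f t ≤ f s + ∑ k ∈ Ioc t s, β k := up s hts hs
      _ ≤ _ := by gcongr; intro k; simp only [mem_Ioc, mem_range]; omega
  · have down : ∀ t, s ≤ t → t < n → f t ≤ f s + ∑ k ∈ Ico s t, β k := by
      intro t hst
      induction t, hst using Nat.le_induction with
      | base => simp
      | succ t hst ih =>
        intro ht
        rw [sum_Ico_succ_top hst]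
        have := hstep (t + 1) t ht (by omega) (.inr rfl)
        have := ih (by omega)
        omega
    calc f t ≤ f s + ∑ k ∈ Ico s t, β k := down t hst ht
      _ ≤ _ := by gcongr; intro k; simp only [mem_Ico, mem_range]; omega

theorem min_sum_le_mul_add_sum_min {n q β : ℕ} {g g' : ℕ → ℕ}
    (hq : ∀ t < n, g t + g' t = q) (hg : ∀ t < n, ∀ s < n, g t ≤ g s + β) :
    min (∑ t ∈ range n, g t) (∑ t ∈ range n, g' t) ≤
      n * β + ∑ t ∈ range n, min (g t) (g' t) := by
  rcases Nat.eq_zero_or_pos n with rfl | hn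
  · simp
  obtain ⟨t₀, ht₀, hmin⟩ := exists_min_image (range n) (fun t => min (g t) (g' t))
    ⟨0, mem_range.2 hn⟩
  rw [mem_range] at ht₀
  have hsum : n * min (g t₀) (g' t₀) ≤ ∑ t ∈ range n, min (g t) (g' t) := by
    simpa using card_nsmul_le_sum (range n) _ _ hmin
  have hg_sum : ∑ t ∈ range n, g t ≤ n * (g t₀ + β) := by
    simpa using sum_le_sum fun t ht => hg t (mem_range.1 ht) t₀ ht₀
  have hg'_sum : ∑ t ∈ range n, g' t ≤ n * (g' t₀ + β) := by
    refine (sum_le_sum (g := fun _ => g' t₀ + β) fun t ht => ?_).trans (by simp)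
    have := hq t (mem_range.1 ht); have := hq t₀ ht₀; have := hg t₀ ht₀ t (mem_range.1 ht)
    omega
  rcases le_total (g t₀) (g' t₀) with h | h
  · rw [min_eq_left h] at hsum
    calc _ ≤ n * (g t₀ + β) := (min_le_left _ _).trans hg_sum
      _ ≤ _ := by rw [mul_add]; omega
  · rw [min_eq_right h] at hsum
    calc _ ≤ n * (g' t₀ + β) := (min_le_right _ _).trans hg'_sum
      _ ≤ _ := by rw [mul_add]; omega

theorem Set.ncard_coe_inter_eq_card_filter {α : Type*} (s : Finset α) (A : Set α)
    [DecidablePred (· ∈ A)] : ((s : Set α) ∩ A).ncard = #(s.filter (· ∈ A)) := by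
  rw [← Set.ncard_coe_finset, coe_filter]
  rfl

namespace LatticeBox

variable {ι : Type*} [Fintype ι]

def exteriorBoundary (B S : Finset (ι → ℤ)) : Finset (ι → ℤ) :=
  B.filter fun v => v ∉ S ∧ ∃ w ∈ S, ∑ i, |v i - w i| = 1

variable {B S : Finset (ι → ℤ)}

theorem mem_exteriorBoundary {v : ι → ℤ} :
    v ∈ exteriorBoundary B S ↔ v ∈ B ∧ v ∉ S ∧ ∃ w ∈ S, ∑ i, |v i - w i| = 1 := by
  simp [exteriorBoundary]

theorem exteriorBoundary_filter_subset (p : (ι → ℤ) → Prop) [DecidablePred p] :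
    exteriorBoundary (B.filter p) (S.filter p) ⊆ (exteriorBoundary B S).filter p := by
  intro v
  simp only [mem_exteriorBoundary, mem_filter]
  rintro ⟨⟨hvB, hv⟩, hvS, w, ⟨hwS, -⟩, hvw⟩
  exact ⟨⟨hvB, fun h => hvS ⟨h, hv⟩, w, hwS, hvw⟩, hv⟩

theorem card_exteriorBoundary_filter_le_ncard (B : Finset (ι → ℤ)) (A : Set (ι → ℤ))
    [DecidablePred (· ∈ A)] :
    #(exteriorBoundary B (B.filter (· ∈ A))) ≤
      ({v | v ∉ A ∧ ∃ w ∈ A, ∑ i, |v i - w i| = 1} ∩ (B : Set (ι → ℤ))).ncard := by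
  rw [← Set.ncard_coe_finset]
  refine Set.ncard_le_ncard (fun v hv => ?_) (B.finite_toSet.subset Set.inter_subset_right)
  obtain ⟨hvB, hvS, w, hwS, hvw⟩ := mem_exteriorBoundary.1 hv
  exact ⟨⟨fun hvA => hvS (mem_filter.2 ⟨hvB, hvA⟩), w, (mem_filter.1 hwS).2, hvw⟩, hvB⟩

variable [DecidableEq ι]

noncomputable def box (a : ι → ℤ) (n : ι → ℕ) : Finset (ι → ℤ) :=
  Fintype.piFinset fun i => Ico (a i) (a i + n i)

variable {a : ι → ℤ} {n : ι → ℕ}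

theorem mem_box {y : ι → ℤ} : y ∈ box a n ↔ ∀ i, a i ≤ y i ∧ y i < a i + n i := by
  simp [box]

theorem coe_box : (box a n : Set (ι → ℤ)) = {y | ∀ i, a i ≤ y i ∧ y i < a i + n i} := by
  ext; simp [mem_box]

theorem card_box : #(box a n) = ∏ i, n i := by
  simp [box]

theorem filter_box_eq_box_update (i : ι) {t : ℕ} (ht : t < n i) :
    (box a n).filter (· i = a i + t) = box (update a i (a i + t)) (update n i 1) := by
  ext y
  simp only [mem_filter, mem_box]
  constructor
  · rintro ⟨hy, hyi⟩ k
    rcases eq_or_ne k i with rfl | hk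
    · simp [hyi]
    · simpa [hk] using hy k
  · intro hy
    have hyi := hy i
    simp only [update_self, Nat.cast_one] at hyi
    refine ⟨fun k => ?_, by omega⟩
    rcases eq_or_ne k i with rfl | hk
    · omega
    · simpa [hk] using hy k

theorem card_eq_sum_card_filter (hS : S ⊆ box a n) (i : ι) :
    #S = ∑ t ∈ range (n i), #(S.filter (· i = a i + t)) := by
  have hmaps : Set.MapsTo (fun y : ι → ℤ => (y i - a i).toNat) S (range (n i)) := by
    intro y hy
    have := mem_box.1 (hS hy) i
    simp only [coe_range, Set.mem_Iio]
    omega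
  rw [card_eq_sum_card_fiberwise hmaps]
  refine sum_congr rfl fun t _ => congrArg card (filter_congr fun y hy => ?_)
  have := mem_box.1 (hS hy) i
  omega

theorem card_filter_le_card_filter_add (hS : S ⊆ box a n) (i : ι) {t t' : ℕ} (ht' : t' < n i)
    (hadj : |(t' : ℤ) - t| = 1) :
    #(S.filter (· i = a i + t)) ≤
      #(S.filter (· i = a i + t')) + #((exteriorBoundary (box a n) S).filter (· i = a i + t')) := by
  set T := S.filter (· i = a i + t)
  set shift : (ι → ℤ) → (ι → ℤ) := (· + Pi.single i ((t' : ℤ) - t))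
  have hshift : ∀ y ∈ T, shift y i = a i + t' := by
    intro y hy
    simp [shift, (mem_filter.1 hy).2]
  have hinter : T.image shift ∩ S ⊆ S.filter (· i = a i + t') := by
    intro v hv
    obtain ⟨hvT, hvS⟩ := mem_inter.1 hv
    obtain ⟨y, hy, rfl⟩ := mem_image.1 hvT
    exact mem_filter.2 ⟨hvS, hshift y hy⟩
  have hsdiff : T.image shift \ S ⊆ (exteriorBoundary (box a n) S).filter (· i = a i + t') := by
    intro v hv
    obtain ⟨hvT, hvS⟩ := mem_sdiff.1 hv
    obtain ⟨y, hy, rfl⟩ := mem_image.1 hvT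
    have hyS := (mem_filter.1 hy).1
    refine mem_filter.2
      ⟨mem_exteriorBoundary.2 ⟨mem_box.2 fun k => ?_, hvS, y, hyS, ?_⟩, hshift y hy⟩
    · rcases eq_or_ne k i with rfl | hk
      · rw [hshift y hy]; omega
      · simpa [shift, hk] using mem_box.1 (hS hyS) k
    · simp only [shift, add_sub_cancel_left, Pi.add_apply]
      rw [sum_eq_single i (fun k _ hk => by simp [hk]) (by simp)]
      simpa using hadj
  calc #T = #(T.image shift) := (card_image_of_injective _ (add_left_injective _)).symm
    _ = #(T.image shift ∩ S) + #(T.image shift \ S) := (card_inter_add_card_sdiff _ _).symm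
    _ ≤ _ := add_le_add (card_le_card hinter) (card_le_card hsdiff)

theorem min_card_le_add_mul_of_slices (hS : S ⊆ box a n) (i : ι) (c : ℕ)
    (hslice : ∀ t < n i,
      min #(S.filter (· i = a i + t)) #((box a n \ S).filter (· i = a i + t)) ≤
        c * #((exteriorBoundary (box a n) S).filter (· i = a i + t))) :
    min #S #(box a n \ S) ≤ (n i + c) * #(exteriorBoundary (box a n) S) := by
  set β := #(exteriorBoundary (box a n) S)
  have hβ : β = ∑ t ∈ range (n i), #((exteriorBoundary (box a n) S).filter (· i = a i + t)) :=
    card_eq_sum_card_filter (filter_subset _ _) i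
  have hq : ∀ t < n i, #(S.filter (· i = a i + t)) + #((box a n \ S).filter (· i = a i + t)) =
      ∏ k, update n i 1 k := by
    intro t ht
    rw [← card_union_of_disjoint (disjoint_filter_filter disjoint_sdiff), ← filter_union,
      union_sdiff_of_subset hS, filter_box_eq_box_update i ht, card_box]
  have hshift : ∀ t < n i, ∀ s < n i,
      #(S.filter (· i = a i + t)) ≤ #(S.filter (· i = a i + s)) + β := by
    intro t ht s hs
    rw [hβ]
    refine le_add_sum_range_of_adjacent (f := fun t => #(S.filter (· i = a i + t)))
      (β := fun t => #((exteriorBoundary (box a n) S).filter (· i = a i + t)))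
      (fun t s _ hs hadj => ?_) ht hs
    exact card_filter_le_card_filter_add hS i hs (by rcases hadj with rfl | rfl <;> simp)
  calc min #S #(box a n \ S)
      ≤ n i * β + ∑ t ∈ range (n i),
          min #(S.filter (· i = a i + t)) #((box a n \ S).filter (· i = a i + t)) := by
        rw [card_eq_sum_card_filter hS i, card_eq_sum_card_filter sdiff_subset i]
        exact min_sum_le_mul_add_sum_min hq hshift
    _ ≤ n i * β + c * β := by
        gcongr
        rw [hβ, mul_sum]
        exact sum_le_sum fun t ht => hslice t (mem_range.1 ht)
    _ = (n i + c) * β := by ring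

theorem min_card_le_sum_mul_card_exteriorBoundary (D : Finset ι) (hD : ∀ i ∉ D, n i ≤ 1)
    (hS : S ⊆ box a n) :
    min #S #(box a n \ S) ≤ (∑ i ∈ D, n i) * #(exteriorBoundary (box a n) S) := by
  induction D using Finset.cons_induction generalizing a n S with
  | empty =>
    have hcard : #(box a n) ≤ 1 := by
      rw [card_box]
      exact prod_le_one (fun _ _ => Nat.zero_le _) fun i _ => hD i (notMem_empty i)
    have := card_sdiff_add_card_eq_card hS
    omega
  | cons i D hi ih =>
    rw [sum_cons]
    refine min_card_le_add_mul_of_slices hS i _ fun t ht => ?_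
    have hslice := filter_box_eq_box_update (a := a) i ht
    have hD' : ∀ k ∉ D, update n i 1 k ≤ 1 := by
      intro k hk
      rcases eq_or_ne k i with rfl | hki
      · simp
      · simpa [hki] using hD k (by simp [hki, hk])
    have := ih hD' (S := S.filter (· i = a i + t)) (hslice ▸ filter_subset_filter _ hS)
    have hsdiff : (box a n).filter (· i = a i + t) \ S.filter (· i = a i + t) =
        (box a n \ S).filter (· i = a i + t) := by
      ext; simp only [mem_sdiff, mem_filter]; tauto
    rw [sum_update_of_notMem hi, ← hslice, hsdiff] at this
    exact this.trans (Nat.mul_le_mul_left _ (card_le_card (exteriorBoundary_filter_subset _)))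

theorem box_add_single_eq_union (a : ι → ℤ) (n : ι → ℕ) (j : ι) :
    box a (n + Pi.single j (n j)) = box a n ∪ box (a + Pi.single j (n j : ℤ)) n := by
  ext y
  simp only [mem_union, mem_box, Pi.add_apply, Nat.cast_add]
  constructor
  · intro h
    by_cases hy : y j < a j + n j
    · refine .inl fun k => ?_
      rcases eq_or_ne k j with rfl | hk
      · exact ⟨(h k).1, hy⟩
      · simpa [hk] using h k
    · refine .inr fun k => ?_
      rcases eq_or_ne k j with rfl | hk
      · have := h k
        simp only [Pi.single_eq_same] at this ⊢
        omega
      · simpa [hk] using h k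
  · rintro (h | h) k <;> have := h k <;> rcases eq_or_ne k j with rfl | hk
    · simp only [Pi.single_eq_same]; omega
    · simpa [hk] using this
    · simp only [Pi.single_eq_same] at this ⊢; omega
    · simpa [hk] using this

theorem pow_le_mul_card_exteriorBoundary_of_adjacent_cubes (m : ℕ) (u : ι → ℤ) (j : ι)
    (A : Set (ι → ℤ)) [DecidablePred (· ∈ A)]
    (hC : m ^ Fintype.card ι ≤ 2 * #((box u fun _ => m).filter (· ∈ A)))
    (hC' : 2 * #((box (u + Pi.single j (m : ℤ)) fun _ => m).filter (· ∈ A)) < m ^ Fintype.card ι) :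
    m ^ Fintype.card ι ≤ 2 * (Fintype.card ι + 1) * m *
      #(exteriorBoundary (box u ((fun _ => m) + Pi.single j m))
        ((box u ((fun _ => m) + Pi.single j m)).filter (· ∈ A))) := by
  set C := box u fun _ => m
  set C' := box (u + Pi.single j (m : ℤ)) fun _ => m
  set U := box u ((fun _ => m) + Pi.single j m)
  set S := U.filter (· ∈ A)
  have hU : U = C ∪ C' := box_add_single_eq_union u (fun _ => m) j
  have hCS : #(C.filter (· ∈ A)) ≤ #S :=
    card_le_card (filter_subset_filter _ (hU ▸ subset_union_left))
  have hC'S : #(C'.filter (· ∉ A)) ≤ #(U \ S) := by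
    refine card_le_card fun v hv => ?_
    obtain ⟨hvC', hvA⟩ := mem_filter.1 hv
    exact mem_sdiff.2 ⟨hU ▸ mem_union_right _ hvC', fun hvS => hvA (mem_filter.1 hvS).2⟩
  have hC'card : #(C'.filter (· ∈ A)) + #(C'.filter (· ∉ A)) = m ^ Fintype.card ι := by
    rw [card_filter_add_card_filter_not, card_box, prod_const, card_univ]
  have hsides : ∑ i, ((fun _ => m) + Pi.single j m : ι → ℕ) i = (Fintype.card ι + 1) * m := by
    simp [sum_add_distrib, add_mul]
  have hiso := min_card_le_sum_mul_card_exteriorBoundary (a := u) univ (by simp)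
    (filter_subset (· ∈ A) U)
  rw [hsides] at hiso
  calc m ^ Fintype.card ι ≤ 2 * min #S #(U \ S) := by omega
    _ ≤ _ := by rw [mul_assoc 2, mul_assoc 2]; exact Nat.mul_le_mul_left 2 hiso

end LatticeBox

open LatticeBox

theorem stmt18_general (d : ℕ) :
    ∃ b : ℝ, 1 ≤ b ∧
      ∀ (l : ℕ) (u : Fin d → ℤ) (j : Fin d) (A : Set (Fin d → ℤ)),
        ((2 : ℝ) ^ (l * d) ≤
            2 * (({y : Fin d → ℤ | ∀ i, u i ≤ y i ∧ y i < u i + 2 ^ l} ∩ A).ncard : ℝ)) →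
        (2 * (({y : Fin d → ℤ |
              ∀ i, u i + (if i = j then 2 ^ l else 0) ≤ y i ∧
                y i < u i + (if i = j then 2 ^ l else 0) + 2 ^ l} ∩ A).ncard : ℝ)
            < (2 : ℝ) ^ (l * d)) →
        (2 : ℝ) ^ (l * (d - 1)) ≤
          b * ((({v : Fin d → ℤ | v ∉ A ∧ ∃ w ∈ A, (∑ i, |v i - w i|) = 1} ∩
              ({y | ∀ i, u i ≤ y i ∧ y i < u i + 2 ^ l} ∪
               {y | ∀ i, u i + (if i = j then 2 ^ l else 0) ≤ y i ∧
                  y i < u i + (if i = j then 2 ^ l else 0) + 2 ^ l})).ncard : ℝ)) := by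
  classical
  refine ⟨2 * (d + 1), by linarith [(d.cast_nonneg : (0 : ℝ) ≤ d)], fun l u j A hC hC' => ?_⟩
  have hCset : {y : Fin d → ℤ | ∀ i, u i ≤ y i ∧ y i < u i + 2 ^ l} =
      ↑(box u fun _ => 2 ^ l) := by
    simp [coe_box]
  have hC'set : {y : Fin d → ℤ | ∀ i, u i + (if i = j then 2 ^ l else 0) ≤ y i ∧
      y i < u i + (if i = j then 2 ^ l else 0) + 2 ^ l} =
      ↑(box (u + Pi.single j ((2 ^ l : ℕ) : ℤ)) fun _ => 2 ^ l) := by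
    simp [coe_box, Pi.single_apply]
  rw [hCset, hC'set, ← coe_union, ← box_add_single_eq_union]
  rw [hCset, Set.ncard_coe_inter_eq_card_filter] at hC
  rw [hC'set, Set.ncard_coe_inter_eq_card_filter] at hC'
  have hcubes := pow_le_mul_card_exteriorBoundary_of_adjacent_cubes (2 ^ l) u j A
    (by rw [Fintype.card_fin, ← pow_mul]; exact_mod_cast hC)
    (by rw [Fintype.card_fin, ← pow_mul]; exact_mod_cast hC')
  have hsplit : l * d = l * (d - 1) + l := by rw [← Nat.mul_add_one, Nat.sub_add_cancel j.pos]
  rw [Fintype.card_fin, ← pow_mul, hsplit, pow_add] at hcubes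
  have hface := Nat.le_of_mul_le_mul_right (hcubes.trans_eq (mul_right_comm _ _ _)) (by positivity)
  calc (2 : ℝ) ^ (l * (d - 1)) ≤ 2 * (d + 1) * #(exteriorBoundary _ _) := by exact_mod_cast hface
    _ ≤ _ := by gcongr; exact_mod_cast card_exteriorBoundary_filter_le_ncard _ A

/-- Admissibility dichotomy bound: there is a constant `b = b(d) ≥ 1` such that for any
two adjacent cubes `C, C'` of side `2^l` in `ℤ^d` sharing exactly one face (`C'` being the
translate of `C` by `2^l` in some direction `j`), and any `A ⊆ ℤ^d` with
`|C ∩ A| ≥ |C|/2` and `|C' ∩ A| < |C'|/2`, one has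
`2^{l(d−1)} ≤ b |∂_ex A ∩ (C ∪ C')|`. -/
theorem stmt18 (d : ℕ) (hd : 1 ≤ d) :
    ∃ b : ℝ, 1 ≤ b ∧
      ∀ (l : ℕ) (u : Fin d → ℤ) (j : Fin d) (A : Set (Fin d → ℤ)),
        ((2 : ℝ) ^ (l * d) ≤
            2 * (({y : Fin d → ℤ | ∀ i, u i ≤ y i ∧ y i < u i + 2 ^ l} ∩ A).ncard : ℝ)) →
        (2 * (({y : Fin d → ℤ |
              ∀ i, u i + (if i = j then 2 ^ l else 0) ≤ y i ∧
                y i < u i + (if i = j then 2 ^ l else 0) + 2 ^ l} ∩ A).ncard : ℝ)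
            < (2 : ℝ) ^ (l * d)) →
        (2 : ℝ) ^ (l * (d - 1)) ≤
          b * ((({v : Fin d → ℤ | v ∉ A ∧ ∃ w ∈ A, (∑ i, |v i - w i|) = 1} ∩
              ({y | ∀ i, u i ≤ y i ∧ y i < u i + 2 ^ l} ∪
               {y | ∀ i, u i + (if i = j then 2 ^ l else 0) ≤ y i ∧
                  y i < u i + (if i = j then 2 ^ l else 0) + 2 ^ l})).ncard : ℝ)) :=
  stmt18_general d
end
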